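/- arXiv:math/0609454 — 4 statements merged into one kernel-verified Lean document; each statement's English description precedes it below -/
import Mathlib

section
/- There is a constant c > 0 depending only on n with the following property. Let f : ℝⁿ₊ → ℝ be locally integrable. (a) If F ∈ BMO(ℝⁿ) satisfies F = f almost everywhere on ℝⁿ₊, then the even extension f_e belongs to BMO(ℝⁿ) and ‖f_e‖_{BMO} ≤ c ‖F‖_{BMO}. (b) Consequently f admits an extension in BMO(ℝⁿ) if and only if f_e ∈ BMO(ℝⁿ), and inf{‖F‖_{BMO} : F ∈ BMO(ℝⁿ), F = f a.e. on ℝⁿ₊} ≤ ‖f_e‖_{BMO} ≤ c · inf{‖F‖_{BMO} : F ∈ BMO(ℝⁿ), F = f a.e. on ℝⁿ₊} (as extended real numbers). -/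
/-!
For a cube `Q = cube a l`, the points of `Q` above the hyperplane and the reflections of the points
of `Q` below it all lie in the cube `Q♭ = foldCube a l` of the same side whose last edge is
centred at `|a_n + l / 2|` (because `t ↦ |t|` is 1-Lipschitz). Hence
`∫_Q |f_e - c| ≤ 2 ∫_{Q♭} |F - c|` for every constant `c`, which is at most `2 ‖F‖_BMO |Q|` for
`c = F_{Q♭}`; as the mean oscillation of `f_e` on `Q` is at most twice its deviation from any
constant, `‖f_e‖_BMO ≤ 4 ‖F‖_BMO`. Conversely `f_e` is itself an admissible extension once its
BMO norm is finite, because a measurable function with finite mean oscillation on every cube is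
locally integrable.
-/

open MeasureTheory ENNReal Real Set

noncomputable section

/-- `ℝⁿ` with the Euclidean norm. -/
abbrev En (n : ℕ) := EuclideanSpace ℝ (Fin n)

/-- Axis-parallel cube with lower corner `a` and side length `l`. -/
def cube {n : ℕ} (a : En n) (l : ℝ) : Set (En n) :=
  {x | ∀ i, x i ∈ Set.Icc (a i) (a i + l)}

/-- The classical BMO seminorm (as an extended real number):
`sup_Q (1/|Q|) ∫_Q |f - f_Q|`, supremum over all axis-parallel cubes. -/
def bmoNorm {n : ℕ} (f : En n → ℝ) : ℝ≥0∞ :=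
  ⨆ (a : En n) (l : ℝ) (_ : 0 < l),
    (∫⁻ x in cube a l, ENNReal.ofReal |f x - ⨍ y in cube a l, f y|) / volume (cube a l)

/-- The last coordinate `x_n` of a point of `ℝ^{n+1}`. -/
def lastC {n : ℕ} (x : En (n + 1)) : ℝ := x (Fin.last n)

/-- Reflection `x̃ = (x', -x_n)` across the hyperplane `{x_n = 0}`. -/
def reflx {n : ℕ} (x : En (n + 1)) : En (n + 1) :=
  WithLp.toLp 2 (Function.update x (Fin.last n) (-(x (Fin.last n))))

/-- Upper half space `ℝⁿ₊ = {x : x_n > 0}`. -/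
def upperHalf (n : ℕ) : Set (En (n + 1)) := {x | 0 < lastC x}

/-- Lower half space `ℝⁿ₋ = {x : x_n < 0}`. -/
def lowerHalf (n : ℕ) : Set (En (n + 1)) := {x | lastC x < 0}

/-- Even extension of a function given on the upper half space. -/
def evenExt {n : ℕ} (f : En (n + 1) → ℝ) : En (n + 1) → ℝ :=
  fun x => if 0 < lastC x then f x else f (reflx x)

/-- Odd extension of a function given on the upper half space. -/
def oddExt {n : ℕ} (f : En (n + 1) → ℝ) : En (n + 1) → ℝ :=
  fun x => if 0 < lastC x then f x else -f (reflx x)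

/-- Zero extension of a function given on the upper half space. -/
def zeroExt {n : ℕ} (f : En (n + 1) → ℝ) : En (n + 1) → ℝ :=
  fun x => if 0 < lastC x then f x else 0

end

open Topology

lemma setLIntegral_enorm_sub_setAverage_le {α E : Type*} [MeasurableSpace α] {μ : Measure α}
    [NormedAddCommGroup E] [NormedSpace ℝ E] [CompleteSpace E]
    {s : Set α} (hs : μ s ≠ ⊤) {g : α → E} (hg : IntegrableOn g s μ) (c : E) :
    ∫⁻ x in s, ‖g x - ⨍ y in s, g y ∂μ‖ₑ ∂μ ≤ 2 * ∫⁻ x in s, ‖g x - c‖ₑ ∂μ := by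
  set A := ⨍ y in s, g y ∂μ
  have hgc : IntegrableOn (fun x => g x - c) s μ := hg.sub (integrableOn_const hs)
  have hmean : ∫ x in s, (g x - c) ∂μ = ∫ _ in s, (A - c) ∂μ := by
    rw [← sub_eq_zero, ← integral_sub hgc (integrableOn_const hs)]
    simpa using setAverage_sub_setAverage hs g
  have hconst : ∫⁻ _ in s, ‖A - c‖ₑ ∂μ ≤ ∫⁻ x in s, ‖g x - c‖ₑ ∂μ := by
    calc ∫⁻ _ in s, ‖A - c‖ₑ ∂μ = ‖∫ x in s, (g x - c) ∂μ‖ₑ := by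
          rw [hmean, setLIntegral_const, setIntegral_const, enorm_smul, Measure.real,
            Real.enorm_of_nonneg ENNReal.toReal_nonneg, ENNReal.ofReal_toReal hs, mul_comm]
      _ ≤ ∫⁻ x in s, ‖g x - c‖ₑ ∂μ := enorm_integral_le_lintegral_enorm _
  calc ∫⁻ x in s, ‖g x - A‖ₑ ∂μ ≤ ∫⁻ x in s, (‖g x - c‖ₑ + ‖A - c‖ₑ) ∂μ := by
        refine lintegral_mono fun x => ?_
        simpa using enorm_sub_le (E := E) (a := g x - c) (b := A - c)
    _ = ∫⁻ x in s, ‖g x - c‖ₑ ∂μ + ∫⁻ _ in s, ‖A - c‖ₑ ∂μ :=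
        lintegral_add_right _ measurable_const
    _ ≤ 2 * ∫⁻ x in s, ‖g x - c‖ₑ ∂μ := by rw [two_mul]; gcongr

section Cube

variable {m : ℕ}

lemma cube_eq_preimage_ofLp (a : En m) (l : ℝ) :
    cube a l = WithLp.ofLp ⁻¹' univ.pi fun i => Icc (a i) (a i + l) := by
  ext x
  simp [cube, Pi.le_def, forall_and]

lemma measurableSet_cube (a : En m) (l : ℝ) : MeasurableSet (cube a l) := by
  rw [cube_eq_preimage_ofLp]
  exact (PiLp.volume_preserving_ofLp (Fin m)).measurable
    (MeasurableSet.univ_pi fun _ => measurableSet_Icc)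

lemma isCompact_cube (a : En m) (l : ℝ) : IsCompact (cube a l) := by
  rw [cube_eq_preimage_ofLp]
  exact (PiLp.continuousLinearEquiv 2 ℝ _).toHomeomorph.isCompact_preimage.2
    (isCompact_univ_pi fun _ => isCompact_Icc)

lemma cube_mem_nhds (x : En m) {l : ℝ} (hl : 0 < l) :
    cube (WithLp.toLp 2 fun i => x i - l / 2) l ∈ 𝓝 x := by
  rw [cube_eq_preimage_ofLp]
  refine (PiLp.continuous_ofLp 2 _).continuousAt.preimage_mem_nhds
    (set_pi_mem_nhds finite_univ fun i _ => Icc_mem_nhds ?_ ?_) <;> dsimp only <;> linarith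

lemma volume_cube (a : En m) (l : ℝ) : volume (cube a l) = ENNReal.ofReal l ^ m := by
  rw [cube_eq_preimage_ofLp, (PiLp.volume_preserving_ofLp (Fin m)).measure_preimage
    (MeasurableSet.univ_pi fun _ => measurableSet_Icc).nullMeasurableSet, volume_pi_pi]
  simp [Real.volume_Icc]

lemma volume_cube_ne_zero (a : En m) {l : ℝ} (hl : 0 < l) : volume (cube a l) ≠ 0 := by
  simp [volume_cube, hl]

lemma volume_cube_ne_top (a : En m) (l : ℝ) : volume (cube a l) ≠ ⊤ := by
  simp [volume_cube]

end Cube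

section Reflection

variable {n : ℕ}

noncomputable def reflxLinearIsometryEquiv : En (n + 1) ≃ₗᵢ[ℝ] En (n + 1) :=
  LinearIsometryEquiv.piLpCongrRight 2 fun i =>
    if i = Fin.last n then LinearIsometryEquiv.neg ℝ else LinearIsometryEquiv.refl ℝ ℝ

lemma reflx_apply (x : En (n + 1)) (i : Fin (n + 1)) :
    reflx x i = if i = Fin.last n then -x i else x i := by
  by_cases hi : i = Fin.last n <;> simp [reflx, hi]

lemma coe_reflxLinearIsometryEquiv : ⇑(reflxLinearIsometryEquiv (n := n)) = reflx := by
  ext x i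
  by_cases hi : i = Fin.last n <;> simp [reflxLinearIsometryEquiv, reflx_apply, hi]

lemma lastC_reflx (x : En (n + 1)) : lastC (reflx x) = -lastC x := by
  simp [lastC, reflx_apply]

lemma measurePreserving_reflx : MeasurePreserving (reflx (n := n)) :=
  coe_reflxLinearIsometryEquiv ▸ reflxLinearIsometryEquiv.measurePreserving

lemma measurableEmbedding_reflx : MeasurableEmbedding (reflx (n := n)) :=
  coe_reflxLinearIsometryEquiv ▸ reflxLinearIsometryEquiv.toHomeomorph.measurableEmbedding

lemma measurable_lastC : Measurable (lastC (n := n)) :=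
  (EuclideanSpace.proj (Fin.last n) : En (n + 1) →L[ℝ] ℝ).measurable

lemma measurableSet_upperHalf : MeasurableSet (upperHalf n) :=
  measurableSet_lt measurable_const measurable_lastC

lemma ae_lastC_ne_zero : ∀ᵐ x : En (n + 1), lastC x ≠ 0 := by
  have hker : {x : En (n + 1) | ¬lastC x ≠ 0} =
      LinearMap.ker (EuclideanSpace.projₗ (𝕜 := ℝ) (Fin.last n)) := by
    ext x; simp [lastC]
  rw [ae_iff, hker]
  refine Measure.addHaar_submodule volume _ fun htop => ?_
  have := htop ▸ Submodule.mem_top (x := EuclideanSpace.single (Fin.last n) (1 : ℝ))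
  simp at this

end Reflection

section Fold

variable {n : ℕ}

def foldCube (a : En (n + 1)) (l : ℝ) : Set (En (n + 1)) :=
  cube (WithLp.toLp 2 (Function.update a.ofLp (Fin.last n) (|lastC a + l / 2| - l / 2))) l

lemma volume_foldCube (a : En (n + 1)) (l : ℝ) : volume (foldCube a l) = volume (cube a l) := by
  simp only [foldCube, volume_cube]

lemma abs_mem_Icc_of_mem_Icc {a l t : ℝ} (ht : t ∈ Icc a (a + l)) :
    |t| ∈ Icc (|a + l / 2| - l / 2) (|a + l / 2| - l / 2 + l) := by
  have hcenter : |t - (a + l / 2)| ≤ l / 2 := abs_le.2 ⟨by linarith [ht.1], by linarith [ht.2]⟩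
  have h := abs_le.1 ((abs_abs_sub_abs_le_abs_sub t (a + l / 2)).trans hcenter)
  constructor <;> linarith [h.1, h.2]

lemma mem_foldCube {a x y : En (n + 1)} {l : ℝ} (hx : x ∈ cube a l)
    (hy : ∀ i ≠ Fin.last n, y i = x i) (hlast : lastC y = |lastC x|) : y ∈ foldCube a l := by
  intro i
  by_cases hi : i = Fin.last n
  · subst hi
    simp only [lastC] at hlast
    simpa [lastC, hlast] using abs_mem_Icc_of_mem_Icc (hx (Fin.last n))
  · simpa [hi, hy i hi] using hx i

end Fold

section EvenExtension

variable {n : ℕ} {f g : En (n + 1) → ℝ}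

lemma evenExt_ae_eq_self : evenExt f =ᵐ[volume.restrict (upperHalf n)] f :=
  (ae_restrict_mem measurableSet_upperHalf).mono fun _ hx => if_pos hx

lemma evenExt_congr_ae (h : f =ᵐ[volume.restrict (upperHalf n)] g) :
    evenExt f =ᵐ[volume] evenExt g := by
  have hU : ∀ᵐ x, x ∈ upperHalf n → f x = g x := (ae_restrict_iff' measurableSet_upperHalf).1 h
  have hL : ∀ᵐ x, reflx x ∈ upperHalf n → f (reflx x) = g (reflx x) :=
    measurePreserving_reflx.quasiMeasurePreserving.ae hU
  filter_upwards [hU, hL, ae_lastC_ne_zero] with x hxU hxL hx0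
  by_cases hx : 0 < lastC x
  · simp [evenExt, hx, hxU hx]
  · have hrefl : reflx x ∈ upperHalf n := by
      simpa [upperHalf, lastC_reflx] using lt_of_le_of_ne (not_lt.1 hx) hx0
    simp [evenExt, hx, hxL hrefl]

lemma aestronglyMeasurable_evenExt (hf : AEStronglyMeasurable f (volume.restrict (upperHalf n))) :
    AEStronglyMeasurable (evenExt f) := by
  obtain ⟨g, hg, hfg⟩ := hf
  exact ⟨evenExt g, (hg.measurable.ite measurableSet_upperHalf
    (hg.measurable.comp measurePreserving_reflx.measurable)).stronglyMeasurable,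
    evenExt_congr_ae hfg⟩

lemma setLIntegral_evenExt_le (F : En (n + 1) → ℝ) (c : ℝ) (a : En (n + 1)) (l : ℝ) :
    ∫⁻ x in cube a l, ENNReal.ofReal |evenExt F x - c|
      ≤ 2 * ∫⁻ x in foldCube a l, ENNReal.ofReal |F x - c| := by
  set Q := cube a l
  set U := upperHalf n
  have hQU : MeasurableSet (Q ∩ U) := (measurableSet_cube a l).inter measurableSet_upperHalf
  have hQU' : MeasurableSet (Q \ U) := (measurableSet_cube a l).diff measurableSet_upperHalf
  have hsubU : Q ∩ U ⊆ foldCube a l := fun x hx =>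
    mem_foldCube hx.1 (fun _ _ => rfl) (abs_of_pos hx.2).symm
  have hsubL : Q \ U ⊆ reflx ⁻¹' foldCube a l := fun x hx =>
    mem_foldCube hx.1 (fun i hi => by simp [reflx_apply, hi])
      (by rw [lastC_reflx, abs_of_nonpos (not_lt.1 hx.2)])
  calc ∫⁻ x in Q, ENNReal.ofReal |evenExt F x - c|
      = ∫⁻ x in Q ∩ U ∪ Q \ U, ENNReal.ofReal |evenExt F x - c| := by rw [inter_union_sdiff]
    _ ≤ (∫⁻ x in Q ∩ U, ENNReal.ofReal |evenExt F x - c|)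
        + ∫⁻ x in Q \ U, ENNReal.ofReal |evenExt F x - c| := lintegral_union_le _ _ _
    _ = (∫⁻ x in Q ∩ U, ENNReal.ofReal |F x - c|)
        + ∫⁻ x in Q \ U, ENNReal.ofReal |F (reflx x) - c| := by
        congr 1
        · exact setLIntegral_congr_fun hQU fun x hx => by simp [evenExt, hx.2.out]
        · exact setLIntegral_congr_fun hQU' fun x hx => by
            simp [evenExt, show ¬0 < lastC x from hx.2]
    _ ≤ (∫⁻ x in foldCube a l, ENNReal.ofReal |F x - c|)
        + ∫⁻ x in reflx ⁻¹' foldCube a l, ENNReal.ofReal |F (reflx x) - c| := by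
        gcongr
    _ = 2 * ∫⁻ x in foldCube a l, ENNReal.ofReal |F x - c| := by
        rw [measurePreserving_reflx.setLIntegral_comp_preimage_emb measurableEmbedding_reflx
          (fun y => ENNReal.ofReal |F y - c|), two_mul]

lemma integrableOn_evenExt_cube {F : En (n + 1) → ℝ} (hF : LocallyIntegrable F)
    (a : En (n + 1)) (l : ℝ) : IntegrableOn (evenExt F) (cube a l) := by
  refine ⟨(aestronglyMeasurable_evenExt hF.aestronglyMeasurable.restrict).restrict, ?_⟩
  have hfold : ∫⁻ x in foldCube a l, ENNReal.ofReal |F x - 0| < ⊤ := by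
    have hint : IntegrableOn F (foldCube a l) := hF.integrableOn_isCompact (isCompact_cube _ l)
    simpa [HasFiniteIntegral, Real.enorm_eq_ofReal_abs] using hint.hasFiniteIntegral
  simpa [HasFiniteIntegral, Real.enorm_eq_ofReal_abs] using
    (setLIntegral_evenExt_le F 0 a l).trans_lt (ENNReal.mul_lt_top ENNReal.ofNat_lt_top hfold)

end EvenExtension

section BMO

variable {m n : ℕ}

lemma setLIntegral_abs_sub_setAverage_cube_le (g : En m → ℝ) (a : En m) {l : ℝ} (hl : 0 < l) :
    ∫⁻ x in cube a l, ENNReal.ofReal |g x - ⨍ y in cube a l, g y|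
      ≤ bmoNorm g * volume (cube a l) :=
  (ENNReal.div_le_iff (volume_cube_ne_zero a hl) (volume_cube_ne_top a l)).1 <|
    le_iSup_of_le a <| le_iSup_of_le l <| le_iSup_of_le hl le_rfl

lemma bmoNorm_congr_ae {f g : En m → ℝ} (h : f =ᵐ[volume] g) : bmoNorm f = bmoNorm g := by
  have hQ : ∀ a l, ⨍ y in cube a l, f y = ⨍ y in cube a l, g y := fun a l =>
    average_congr (ae_restrict_of_ae h)
  simp only [bmoNorm, hQ]
  congr! 5 with a l
  congr 1
  exact lintegral_congr_ae (ae_restrict_of_ae (h.mono fun x hx => by simp only [hx]))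

lemma locallyIntegrable_of_bmoNorm_ne_top {g : En m → ℝ} (hg : AEStronglyMeasurable g)
    (hbmo : bmoNorm g ≠ ⊤) : LocallyIntegrable g := by
  intro x
  set Q := cube (WithLp.toLp 2 fun i => x i - 1 / 2) 1
  set A := ⨍ y in Q, g y
  have hosc : ∫⁻ y in Q, ‖g y - A‖ₑ < ⊤ := by
    simpa only [Real.enorm_eq_ofReal_abs] using
      (setLIntegral_abs_sub_setAverage_cube_le g _ one_pos).trans_lt
        (ENNReal.mul_lt_top hbmo.lt_top (volume_cube_ne_top _ _).lt_top)
  refine ⟨Q, cube_mem_nhds x one_pos, hg.restrict, ?_⟩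
  calc ∫⁻ y in Q, ‖g y‖ₑ ≤ ∫⁻ y in Q, (‖g y - A‖ₑ + ‖A‖ₑ) :=
        lintegral_mono fun y => by simpa using enorm_add_le (g y - A) A
    _ = (∫⁻ y in Q, ‖g y - A‖ₑ) + ‖A‖ₑ * volume Q := by
        rw [lintegral_add_right _ measurable_const, setLIntegral_const]
    _ < ⊤ := ENNReal.add_lt_top.2
        ⟨hosc, ENNReal.mul_lt_top enorm_lt_top (volume_cube_ne_top _ _).lt_top⟩

lemma bmoNorm_evenExt_le {F : En (n + 1) → ℝ} (hF : LocallyIntegrable F) :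
    bmoNorm (evenExt F) ≤ 4 * bmoNorm F := by
  refine iSup_le fun a => iSup₂_le fun l hl => ?_
  rw [ENNReal.div_le_iff (volume_cube_ne_zero a hl) (volume_cube_ne_top a l)]
  set c := ⨍ y in foldCube a l, F y
  calc ∫⁻ x in cube a l, ENNReal.ofReal |evenExt F x - ⨍ y in cube a l, evenExt F y|
      ≤ 2 * ∫⁻ x in cube a l, ENNReal.ofReal |evenExt F x - c| := by
        simpa only [Real.enorm_eq_ofReal_abs] using setLIntegral_enorm_sub_setAverage_le
          (volume_cube_ne_top a l) (integrableOn_evenExt_cube hF a l) c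
    _ ≤ 2 * (2 * ∫⁻ x in foldCube a l, ENNReal.ofReal |F x - c|) := by
        gcongr; exact setLIntegral_evenExt_le F c a l
    _ ≤ 2 * (2 * (bmoNorm F * volume (foldCube a l))) := by
        gcongr; exact setLIntegral_abs_sub_setAverage_cube_le F _ hl
    _ = 4 * bmoNorm F * volume (cube a l) := by
        rw [volume_foldCube]; ring

end BMO

/-- extension by even reflection is (up to a constant) the optimal
`BMO` extension of a function on the upper half space. -/
theorem stmt0 (n : ℕ) :
    ∃ c : ℝ, 0 < c ∧
      ∀ f : En (n + 1) → ℝ, LocallyIntegrableOn f (upperHalf n) volume →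
        ((∀ F : En (n + 1) → ℝ, LocallyIntegrable F volume → bmoNorm F < ⊤ →
            (∀ᵐ x ∂(volume.restrict (upperHalf n)), F x = f x) →
            bmoNorm (evenExt f) ≤ ENNReal.ofReal c * bmoNorm F) ∧
        (⨅ (F : En (n + 1) → ℝ) (_ : LocallyIntegrable F volume)
            (_ : ∀ᵐ x ∂(volume.restrict (upperHalf n)), F x = f x), bmoNorm F)
          ≤ bmoNorm (evenExt f) ∧
        bmoNorm (evenExt f)
          ≤ ENNReal.ofReal c *
            ⨅ (F : En (n + 1) → ℝ) (_ : LocallyIntegrable F volume)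
              (_ : ∀ᵐ x ∂(volume.restrict (upperHalf n)), F x = f x), bmoNorm F) := by
  refine ⟨4, by norm_num, fun f hf => ?_⟩
  have hext : ∀ F : En (n + 1) → ℝ, LocallyIntegrable F volume →
      (∀ᵐ x ∂(volume.restrict (upperHalf n)), F x = f x) →
      bmoNorm (evenExt f) ≤ 4 * bmoNorm F := fun F hF hFf =>
    (bmoNorm_congr_ae (evenExt_congr_ae (Filter.EventuallyEq.symm hFf))).le.trans
      (bmoNorm_evenExt_le hF)
  rw [ENNReal.ofReal_ofNat]
  refine ⟨fun F hF _ hFf => hext F hF hFf, ?_, ?_⟩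
  · rcases eq_or_ne (bmoNorm (evenExt f)) ⊤ with htop | htop
    · exact htop ▸ le_top
    · exact iInf₂_le_of_le (evenExt f) (locallyIntegrable_of_bmoNorm_ne_top
        (aestronglyMeasurable_evenExt hf.aestronglyMeasurable) htop) <|
        iInf_le_of_le evenExt_ae_eq_self le_rfl
  · simp only [ENNReal.mul_iInf_of_ne (by norm_num : (4 : ℝ≥0∞) ≠ 0) (by norm_num)]
    exact le_iInf₂ fun F hF => le_iInf (hext F hF)
end

section
/- Let 0 < α < n and let p_t(x,y) (t > 0, x, y ∈ ℝⁿ) be measurable kernels such that for all x, y the map t ↦ p_t(x,y) is differentiable on (0,∞), with the Gaussian bounds |p_t(x,y)| ≤ C t^{−n/2} e^{−c|x−y|²/t} and |t ∂_t p_t(x,y)| ≤ C t^{−n/2} e^{−c|x−y|²/t}. Then there is a constant c′ > 0, depending only on n, α, C and c, such that for every t > 0 and all x ≠ y in ℝⁿ: ∫_0^∞ s^{α/2 − 1} | p_s(x,y) − p_{s+t}(x,y) | ds ≤ c′ t |x−y|^{α − n − 2}. (Consequently the kernel K_{α,t}(x,y) = (1/Γ(α/2)) ∫_0^∞ s^{α/2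 − 1} (p_s(x,y) − p_{s+t}(x,y)) ds of the operator (I − e^{−tL}) L^{−α/2} satisfies |K_{α,t}(x,y)| ≤ c′′ |x−y|^{α−n} · t/|x−y|².) -/
open MeasureTheory ENNReal Real Set

theorem rpow_mul_exp_neg_le {b z : ℝ} (hb : 0 < b) (hz : 0 ≤ z) :
    z ^ b * exp (-z) ≤ (b / exp 1) ^ b := by
  have hlin : z / b ≤ exp (z / b - 1) := by linarith [add_one_le_exp (z / b - 1)]
  have hpow : (z / b) ^ b ≤ exp (z - b) := by
    calc (z / b) ^ b ≤ exp (z / b - 1) ^ b := rpow_le_rpow (by positivity) hlin hb.le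
      _ = exp (z - b) := by rw [← exp_mul]; congr 1; field_simp
  calc z ^ b * exp (-z) = b ^ b * (z / b) ^ b * exp (-z) := by
        rw [div_rpow hz hb.le, mul_div_cancel₀ _ (by positivity)]
    _ ≤ b ^ b * exp (z - b) * exp (-z) := by gcongr
    _ = (b / exp 1) ^ b := by
        rw [div_rpow hb.le (exp_pos 1).le, exp_one_rpow, mul_assoc, ← exp_add, div_eq_mul_inv,
          ← exp_neg]
        ring_nf

theorem rpow_neg_mul_exp_neg_div_le {b c R u : ℝ} (hb : 0 < b) (hc : 0 < c) (hR : 0 < R)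
    (hu : 0 < u) :
    u ^ (-b) * exp (-(c * R / u)) ≤
      max 1 ((b / (c * exp 1)) ^ b) * min (u ^ (-b)) (R ^ (-b)) := by
  rw [mul_min_of_nonneg _ _ (by positivity)]
  refine le_min ?_ ?_
  · calc u ^ (-b) * exp (-(c * R / u)) ≤ u ^ (-b) * 1 := by
          gcongr; rw [exp_le_one_iff, neg_nonpos]; positivity
      _ ≤ _ := by rw [mul_comm]; gcongr; exact le_max_left _ _
  · have hz := rpow_mul_exp_neg_le hb (by positivity : 0 ≤ c * R / u)
    calc u ^ (-b) * exp (-(c * R / u))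
        = (c * R) ^ (-b) * ((c * R / u) ^ b * exp (-(c * R / u))) := by
          rw [div_rpow (by positivity) hu.le, rpow_neg hu.le, rpow_neg (by positivity)]
          field_simp
      _ ≤ (c * R) ^ (-b) * (b / exp 1) ^ b := by gcongr
      _ = (b / (c * exp 1)) ^ b * R ^ (-b) := by
          rw [mul_rpow hc.le hR.le, rpow_neg hc.le, rpow_neg hR.le, mul_comm c,
            ← div_div, div_rpow (by positivity) hc.le]
          ring
      _ ≤ _ := by gcongr; exact le_max_right _ _

theorem abs_sub_le_mul_of_abs_deriv_le {f f' : ℝ → ℝ} {s t B : ℝ} (ht : 0 ≤ t)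
    (hf : ∀ u ∈ Icc s (s + t), HasDerivAt f (f' u) u) (hB : ∀ u ∈ Ico s (s + t), |f' u| ≤ B) :
    |f s - f (s + t)| ≤ B * t := by
  have := norm_image_sub_le_of_norm_deriv_le_segment' (fun u hu => (hf u hu).hasDerivWithinAt)
    hB (s + t) (right_mem_Icc.2 (by linarith))
  rwa [Real.norm_eq_abs, abs_sub_comm, add_sub_cancel_left] at this

theorem lintegral_Ioc_rpow {β R : ℝ} (hβ : -1 < β) (hR : 0 ≤ R) :
    ∫⁻ s in Ioc 0 R, ENNReal.ofReal (s ^ β) = ENNReal.ofReal (R ^ (β + 1) / (β + 1)) := by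
  rw [← ofReal_integral_eq_lintegral_ofReal, ← intervalIntegral.integral_of_le hR,
    integral_rpow (Or.inl hβ), zero_rpow (by linarith), sub_zero]
  · exact (intervalIntegral.intervalIntegrable_rpow' hβ).1
  · exact (ae_restrict_iff' measurableSet_Ioc).2 (ae_of_all _ fun s hs => rpow_nonneg hs.1.le β)

theorem lintegral_Ioi_rpow {β R : ℝ} (hβ : β < -1) (hR : 0 < R) :
    ∫⁻ s in Ioi R, ENNReal.ofReal (s ^ β) = ENNReal.ofReal (-R ^ (β + 1) / (β + 1)) := by
  rw [← ofReal_integral_eq_lintegral_ofReal, integral_Ioi_rpow_of_lt hβ hR]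
  · exact integrableOn_Ioi_rpow_of_lt hβ hR
  · exact (ae_restrict_iff' measurableSet_Ioi).2
      (ae_of_all _ fun s hs => rpow_nonneg (hR.trans hs).le β)

theorem lintegral_rpow_mul_min_rpow_neg_le {a b R : ℝ} (ha : 0 < a) (hab : a < b) (hR : 0 < R) :
    ∫⁻ s in Ioi 0, ENNReal.ofReal (s ^ (a - 1) * min (s ^ (-b)) (R ^ (-b)))
      ≤ ENNReal.ofReal ((1 / a + 1 / (b - a)) * R ^ (a - b)) := by
  rw [← Ioc_union_Ioi_eq_Ioi hR.le, lintegral_union measurableSet_Ioi Ioc_disjoint_Ioi_same]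
  have hnear : ∫⁻ s in Ioc 0 R, ENNReal.ofReal (s ^ (a - 1) * min (s ^ (-b)) (R ^ (-b)))
      ≤ ENNReal.ofReal (1 / a * R ^ (a - b)) := by
    calc _ ≤ ∫⁻ s in Ioc 0 R, ENNReal.ofReal (R ^ (-b)) * ENNReal.ofReal (s ^ (a - 1)) := by
          refine setLIntegral_mono' measurableSet_Ioc fun s hs => ?_
          rw [← ofReal_mul (by positivity), mul_comm]
          gcongr
          · exact rpow_nonneg hs.1.le _
          · exact min_le_right _ _
      _ = ENNReal.ofReal (1 / a * R ^ (a - b)) := by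
          rw [lintegral_const_mul' _ _ ofReal_ne_top,
            lintegral_Ioc_rpow (by linarith) hR.le, ← ofReal_mul (by positivity),
            sub_add_cancel, sub_eq_add_neg a b, rpow_add hR]
          congr 1
          ring
  have hfar : ∫⁻ s in Ioi R, ENNReal.ofReal (s ^ (a - 1) * min (s ^ (-b)) (R ^ (-b)))
      ≤ ENNReal.ofReal (1 / (b - a) * R ^ (a - b)) := by
    calc _ ≤ ∫⁻ s in Ioi R, ENNReal.ofReal (s ^ (a - 1 - b)) := by
          refine setLIntegral_mono' measurableSet_Ioi fun s hs => ?_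
          have hs0 : 0 < s := hR.trans hs
          rw [sub_eq_add_neg (a - 1), rpow_add hs0]
          gcongr
          exact min_le_left _ _
      _ = ENNReal.ofReal (1 / (b - a) * R ^ (a - b)) := by
          rw [lintegral_Ioi_rpow (by linarith) hR, show a - 1 - b + 1 = a - b by ring, neg_div,
            ← div_neg, neg_sub, div_eq_inv_mul, one_div]
  calc _ ≤ ENNReal.ofReal (1 / a * R ^ (a - b)) + ENNReal.ofReal (1 / (b - a) * R ^ (a - b)) :=
        add_le_add hnear hfar
    _ = _ := by
        rw [← ofReal_add (by positivity) (by have := sub_pos.2 hab; positivity), add_mul]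

theorem abs_le_mul_min_of_abs_mul_le_gaussian {C c R ν u d : ℝ} (hC : 0 ≤ C) (hc : 0 < c)
    (hR : 0 < R) (hν : -1 < ν) (hu : 0 < u)
    (h : |u * d| ≤ C * u ^ (-ν) * exp (-c * R / u)) :
    |d| ≤ C * max 1 (((ν + 1) / (c * exp 1)) ^ (ν + 1)) *
      min (u ^ (-(ν + 1))) (R ^ (-(ν + 1))) := by
  have hpow : u ^ (-(ν + 1)) = u ^ (-ν) / u := by
    rw [neg_add, rpow_add hu, Real.rpow_neg_one, div_eq_mul_inv]
  calc |d| = |u * d| / u := by rw [abs_mul, abs_of_pos hu]; field_simp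
    _ ≤ C * u ^ (-ν) * exp (-c * R / u) / u := by gcongr
    _ = C * (u ^ (-(ν + 1)) * exp (-(c * R / u))) := by
        rw [hpow, neg_mul, neg_div u (c * R)]
        ring
    _ ≤ _ := by
        rw [mul_assoc]
        exact mul_le_mul_of_nonneg_left (rpow_neg_mul_exp_neg_div_le (by linarith) hc hR hu) hC

/-- kernel estimate for `(I - e^{-tL}) L^{-α/2}`:
`∫_0^∞ s^{α/2-1} |p_s(x,y) - p_{s+t}(x,y)| ds ≤ c' t |x-y|^{α-n-2}`. -/
theorem stmt14 (n : ℕ) (C c α : ℝ) (hC : 0 < C) (hc : 0 < c)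
    (hα0 : 0 < α) (hαn : α < n) :
    ∃ c' : ℝ, 0 < c' ∧
      ∀ p p' : ℝ → En n → En n → ℝ,
        (∀ t : ℝ, 0 < t → ∀ x y : En n,
          HasDerivAt (fun s : ℝ => p s x y) (p' t x y) t) →
        (∀ t : ℝ, 0 < t → ∀ x y : En n,
          |p t x y| ≤ C * t ^ (-(n : ℝ) / 2) * Real.exp (-c * ‖x - y‖ ^ 2 / t)) →
        (∀ t : ℝ, 0 < t → ∀ x y : En n,
          |t * p' t x y| ≤ C * t ^ (-(n : ℝ) / 2) * Real.exp (-c * ‖x - y‖ ^ 2 / t)) →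
        ∀ t : ℝ, 0 < t → ∀ x y : En n, x ≠ y →
          (∫⁻ s in Set.Ioi (0 : ℝ),
              ENNReal.ofReal (s ^ (α / 2 - 1) * |p s x y - p (s + t) x y|))
            ≤ ENNReal.ofReal (c' * t * ‖x - y‖ ^ (α - n - 2)) := by
  set b : ℝ := n / 2 + 1 with hb
  have hab : α / 2 < b := by linarith
  set K := C * max 1 ((b / (c * exp 1)) ^ b)
  refine ⟨K * (1 / (α / 2) + 1 / (b - α / 2)), by have := sub_pos.2 hab; positivity, ?_⟩
  intro p p' hp _ hp' t ht x y hxy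
  set R := ‖x - y‖ ^ 2 with hR_def
  have hR : 0 < R := by have := norm_pos_iff.2 (sub_ne_zero.2 hxy); positivity
  have hderiv_le (u : ℝ) (hu : 0 < u) : |p' u x y| ≤ K * min (u ^ (-b)) (R ^ (-b)) :=
    abs_le_mul_min_of_abs_mul_le_gaussian hC.le hc hR (by linarith) hu
      (by rw [← neg_div]; exact hp' u hu x y)
  have hsub_le (s : ℝ) (hs : 0 < s) :
      |p s x y - p (s + t) x y| ≤ K * t * min (s ^ (-b)) (R ^ (-b)) := by
    rw [mul_right_comm]
    refine abs_sub_le_mul_of_abs_deriv_le ht.le (fun u hu => hp u (hs.trans_le hu.1) x y)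
      fun u hu => (hderiv_le u (hs.trans_le hu.1)).trans ?_
    gcongr ?_ * min ?_ _
    exact rpow_le_rpow_of_nonpos hs hu.1 (by linarith)
  calc ∫⁻ s in Ioi 0, ENNReal.ofReal (s ^ (α / 2 - 1) * |p s x y - p (s + t) x y|)
      ≤ ∫⁻ s in Ioi 0, ENNReal.ofReal (K * t) *
          ENNReal.ofReal (s ^ (α / 2 - 1) * min (s ^ (-b)) (R ^ (-b))) := by
        refine setLIntegral_mono' measurableSet_Ioi fun s hs => ?_
        rw [← ofReal_mul (by positivity), mul_left_comm]
        exact ofReal_le_ofReal (mul_le_mul_of_nonneg_left (hsub_le s hs) (rpow_nonneg hs.le _))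
    _ ≤ ENNReal.ofReal (K * t) *
          ENNReal.ofReal ((1 / (α / 2) + 1 / (b - α / 2)) * R ^ (α / 2 - b)) := by
        rw [lintegral_const_mul' _ _ ofReal_ne_top]
        gcongr
        exact lintegral_rpow_mul_min_rpow_neg_le (by positivity) hab hR
    _ = _ := by
        rw [← ofReal_mul (by positivity), hR_def, ← Real.rpow_natCast, ← rpow_mul (norm_nonneg _),
          show ((2 : ℕ) : ℝ) * (α / 2 - b) = α - n - 2 by rw [hb]; push_cast; ring]
        ring_nf
end

section
/- For every α with 0 < α < 1 and every x with 0 < x < 1/2: ∫_x^{1/2} (y − x)^{α − 1} · ( −1/(y^α log y) ) dy ≥ log( log(1/x) ) − log( log 2 ). -/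
/-!
Since `α - 1 < 0` and `0 < y - x ≤ y`, the kernel satisfies `(y - x) ^ (α - 1) ≥ y ^ (α - 1)`,
so the integrand dominates `-1 / (y * log y)`, the derivative of `-log (-log y)`. Integrating
the latter over `(x, 1/2]` gives exactly `log (-log x) - log (log 2)`.
-/

open MeasureTheory Real Set

lemma integrableOn_Ioc_sub_rpow {a b r : ℝ} (hab : a ≤ b) (hr : -1 < r) :
    IntegrableOn (fun y => (y - a) ^ r) (Ioc a b) := by
  have h := (intervalIntegral.intervalIntegrable_rpow' (a := 0) (b := b - a) hr).comp_sub_right a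
  simp only [zero_add, sub_add_cancel] at h
  exact (intervalIntegrable_iff_integrableOn_Ioc_of_le hab).mp h

section UnitInterval

variable {a b : ℝ}

lemma continuousOn_neg_inv_rpow_mul_log (α : ℝ) (ha : 0 < a) (hb : b < 1) :
    ContinuousOn (fun y => -1 / (y ^ α * log y)) (Icc a b) := by
  have hpos : ∀ y ∈ Icc a b, 0 < y := fun y hy => ha.trans_le hy.1
  refine continuousOn_const.div
    ((continuousOn_id.rpow_const fun y hy => Or.inl (hpos y hy).ne').mul
      (continuousOn_log.mono fun y hy => (hpos y hy).ne')) fun y hy => ?_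
  exact mul_ne_zero (rpow_pos_of_pos (hpos y hy) α).ne'
    (log_neg (hpos y hy) (hy.2.trans_lt hb)).ne

lemma continuousOn_neg_inv_mul_log (ha : 0 < a) (hb : b < 1) :
    ContinuousOn (fun y => -1 / (y * log y)) (Icc a b) := by
  simpa using continuousOn_neg_inv_rpow_mul_log 1 ha hb

lemma hasDerivAt_neg_log_neg_log {y : ℝ} (hy0 : 0 < y) (hy1 : y < 1) :
    HasDerivAt (fun t => -log (-log t)) (-1 / (y * log y)) y := by
  have hlog : log y < 0 := log_neg hy0 hy1
  refine ((hasDerivAt_log hy0.ne').neg.log (neg_ne_zero.mpr hlog.ne)).neg.congr_deriv ?_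
  simp only [Pi.neg_apply]
  field_simp

lemma integral_Ioc_neg_inv_mul_log (ha : 0 < a) (hab : a ≤ b) (hb : b < 1) :
    ∫ y in Ioc a b, -1 / (y * log y) = log (-log a) - log (-log b) := by
  rw [← intervalIntegral.integral_of_le hab,
    intervalIntegral.integral_eq_sub_of_hasDerivAt (f := fun t => -log (-log t))
      (fun y hy => hasDerivAt_neg_log_neg_log (ha.trans_le (uIcc_of_le hab ▸ hy).1)
        ((uIcc_of_le hab ▸ hy).2.trans_lt hb))
      ((continuousOn_neg_inv_mul_log ha hb).intervalIntegrable_of_Icc hab)]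
  ring

lemma integrableOn_rpow_sub_mul_neg_inv_rpow_mul_log {α : ℝ} (hα : 0 < α) (ha : 0 < a)
    (hab : a ≤ b) (hb : b < 1) :
    IntegrableOn (fun y => (y - a) ^ (α - 1) * (-1 / (y ^ α * log y))) (Ioc a b) :=
  (integrableOn_Ioc_sub_rpow hab (by linarith)).mul_continuousOn_of_subset
    (continuousOn_neg_inv_rpow_mul_log α ha hb) measurableSet_Ioc isCompact_Icc Ioc_subset_Icc_self

end UnitInterval

lemma neg_inv_mul_log_le_rpow_sub_mul {α x y : ℝ} (hα : α ≤ 1) (hx : 0 ≤ x) (hxy : x < y)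
    (hy : y < 1) :
    -1 / (y * log y) ≤ (y - x) ^ (α - 1) * (-1 / (y ^ α * log y)) := by
  have hy0 : 0 < y := hx.trans_lt hxy
  have hlog : log y < 0 := log_neg hy0 hy
  have hsplit : -1 / (y * log y) = y ^ (α - 1) * (-1 / (y ^ α * log y)) := by
    rw [rpow_sub hy0, rpow_one]
    field_simp
  rw [hsplit]
  refine mul_le_mul_of_nonneg_right
    (rpow_le_rpow_of_nonpos (sub_pos.mpr hxy) (by linarith) (by linarith)) ?_
  exact div_nonneg_of_nonpos (by norm_num) (mul_nonpos_of_nonneg_of_nonpos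
    (rpow_pos_of_pos hy0 α).le hlog.le)

/-- lower bound for the fractional integral of
`f(y) = -1/(y^α log y)` on `(x, 1/2]`. -/
theorem stmt16 (α x : ℝ) (hα0 : 0 < α) (hα1 : α < 1) (hx0 : 0 < x) (hx : x < 1 / 2) :
    Real.log (Real.log (1 / x)) - Real.log (Real.log 2) ≤
      ∫ y in Set.Ioc x (1 / 2), (y - x) ^ (α - 1) * (-1 / (y ^ α * Real.log y)) := by
  have hhalf : (1 / 2 : ℝ) < 1 := by norm_num
  have hlhs : log (log (1 / x)) - log (log 2) = ∫ y in Ioc x (1 / 2), -1 / (y * log y) := by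
    rw [integral_Ioc_neg_inv_mul_log hx0 hx.le hhalf, one_div, one_div, log_inv, log_inv, neg_neg]
  rw [hlhs]
  exact setIntegral_mono_on
    ((continuousOn_neg_inv_mul_log hx0 hhalf).integrableOn_Icc.mono_set Ioc_subset_Icc_self)
    (integrableOn_rpow_sub_mul_neg_inv_rpow_mul_log hα0 hx0 hx.le hhalf) measurableSet_Ioc
    fun y hy => neg_inv_mul_log_le_rpow_sub_mul hα1.le hx0.le hy.1 (hy.2.trans_lt hhalf)
end

section
/- Let 0 < α < 1 and let w : ℝ → ℝ be defined by w(y) = −1/(|y|^α log|y|) for 0 < |y| ≤ 1/2 and w(y) = 0 otherwise. Define G : ℝ → ℝ by G(x) = 0 for x ≤ 0 and G(x) = ∫_{−1/2}^{1/2} |x − y|^{α − 1} w(y) dy for x > 0. Then G(x) is finite for almost every x, G is locally integrable, and G does not belong to BMO(ℝ): for every M > 0 there is a bounded interval I ⊂ ℝ with (1/|I|)∫_I |G(x) − G_I| dx > M, where G_I = (1/|I|)∫_I G. -/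
open MeasureTheory ENNReal Real Set

/-!
The kernel `|t| ^ (α - 1)` is locally integrable and `w` is integrable, so Tonelli on bounded
rectangles makes the potential finite a.e. and locally integrable. On `(u, 1/2]` the kernel
`|x - y| ^ (α - 1)` dominates `y ^ (α - 1)` for `0 < x ≤ u`, and
`y ^ (α - 1) w y = -1 / (y log y)` has antiderivative `-log (-log y)`. Hence
`G ≥ log (-log u) - log (log 2)` on `(0, u]`, while `G = 0` on `(-u, 0]`; the mean oscillation
of `G` on `(-u, u]` is then at least a quarter of that bound, which tends to infinity as
`u → 0`.
-/

namespace FractionalPotentialNotBMO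

section Kernel

variable {r : ℝ}

theorem intervalIntegrable_abs_rpow (hr : -1 < r) (a b : ℝ) :
    IntervalIntegrable (fun t : ℝ => |t| ^ r) volume a b := by
  have from_zero_of_nonneg (c : ℝ) (hc : 0 ≤ c) :
      IntervalIntegrable (fun t : ℝ => |t| ^ r) volume 0 c :=
    (intervalIntegral.intervalIntegrable_rpow' hr).congr_uIoo fun t ht => by
      rw [uIoo_of_le hc] at ht
      simp only [abs_of_pos ht.1]
  have from_zero (c : ℝ) : IntervalIntegrable (fun t : ℝ => |t| ^ r) volume 0 c := by
    rcases le_total 0 c with hc | hc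
    · exact from_zero_of_nonneg c hc
    · rw [IntervalIntegrable.iff_comp_neg, neg_zero]
      simpa only [abs_neg] using from_zero_of_nonneg (-c) (neg_nonneg.2 hc)
  exact (from_zero a).symm.trans (from_zero b)

theorem integrableOn_abs_sub_rpow (hr : -1 < r) (y a b : ℝ) :
    IntegrableOn (fun x : ℝ => |x - y| ^ r) (Icc a b) := by
  have h := (intervalIntegrable_abs_rpow hr (a - y) (b - y)).comp_sub_right y
  rw [sub_add_cancel, sub_add_cancel, intervalIntegrable_iff'] at h
  exact h.mono_set Icc_subset_uIcc

theorem setIntegral_abs_sub_rpow (r y a b : ℝ) :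
    ∫ x in Icc a b, |x - y| ^ r = ∫ t in Icc (a - y) (b - y), |t| ^ r := by
  have h := (measurePreserving_sub_right volume y).setIntegral_preimage_emb
    (measurableEmbedding_subRight y) (fun t : ℝ => |t| ^ r) (Icc (a - y) (b - y))
  rwa [preimage_sub_const_Icc, sub_add_cancel, sub_add_cancel] at h

theorem setIntegral_abs_sub_rpow_le (hr : -1 < r) {y a b c d : ℝ} (hy : y ∈ Icc c d) :
    ∫ x in Icc a b, |x - y| ^ r ≤ ∫ t in Icc (a - d) (b - c), |t| ^ r := by
  rw [setIntegral_abs_sub_rpow]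
  refine setIntegral_mono_set ?_ (ae_of_all _ fun t => rpow_nonneg (abs_nonneg t) r) ?_
  · exact ((intervalIntegrable_iff').1 (intervalIntegrable_abs_rpow hr _ _)).mono_set
      Icc_subset_uIcc
  · exact (Icc_subset_Icc (by linarith [hy.2]) (by linarith [hy.1])).eventuallyLE

theorem integrable_abs_sub_rpow_mul_prod (hr : -1 < r) {f : ℝ → ℝ} {c d : ℝ}
    (hf : IntegrableOn f (Icc c d)) (a b : ℝ) :
    Integrable (fun p : ℝ × ℝ => |p.1 - p.2| ^ r * f p.2)
      ((volume.restrict (Icc a b)).prod (volume.restrict (Icc c d))) := by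
  have hmeas : AEStronglyMeasurable (fun p : ℝ × ℝ => |p.1 - p.2| ^ r * f p.2)
      ((volume.restrict (Icc a b)).prod (volume.restrict (Icc c d))) :=
    ((measurable_fst.sub measurable_snd).abs.pow_const r).aestronglyMeasurable.mul
      hf.aestronglyMeasurable.comp_snd
  refine (integrable_prod_iff' hmeas).2
    ⟨ae_of_all _ fun y => (integrableOn_abs_sub_rpow hr y a b).mul_const (f y), ?_⟩
  refine (hf.norm.const_mul (∫ t in Icc (a - d) (b - c), |t| ^ r)).mono'
    hmeas.norm.prod_swap.integral_prod_right' ?_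
  filter_upwards [ae_restrict_mem measurableSet_Icc] with y hy
  simp only [norm_mul, Real.norm_of_nonneg (rpow_nonneg (abs_nonneg _) r)]
  rw [integral_mul_const, Real.norm_of_nonneg
    (mul_nonneg (integral_nonneg fun _ => rpow_nonneg (abs_nonneg _) r) (norm_nonneg _))]
  exact mul_le_mul_of_nonneg_right (setIntegral_abs_sub_rpow_le hr hy) (norm_nonneg _)

theorem ae_integrableOn_abs_sub_rpow_mul (hr : -1 < r) {f : ℝ → ℝ} {c d : ℝ}
    (hf : IntegrableOn f (Icc c d)) :
    ∀ᵐ x, IntegrableOn (fun y => |x - y| ^ r * f y) (Icc c d) := by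
  have on_unit_intervals (n : ℤ) :
      ∀ᵐ x ∂volume.restrict (Icc (n : ℝ) (n + 1)),
        IntegrableOn (fun y => |x - y| ^ r * f y) (Icc c d) :=
    (integrable_abs_sub_rpow_mul_prod hr hf n (n + 1)).prod_right_ae
  have h := (ae_restrict_iUnion_iff _ _).2 on_unit_intervals
  rwa [iUnion_Icc_intCast, Measure.restrict_univ] at h

theorem integrableOn_integral_abs_sub_rpow_mul (hr : -1 < r) {f : ℝ → ℝ} {c d : ℝ}
    (hf : IntegrableOn f (Icc c d)) (a b : ℝ) :
    IntegrableOn (fun x => ∫ y in Icc c d, |x - y| ^ r * f y) (Icc a b) :=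
  (integrable_abs_sub_rpow_mul_prod hr hf a b).integral_prod_left

end Kernel

noncomputable def logWeight (α y : ℝ) : ℝ :=
  if 0 < |y| ∧ |y| ≤ 1 / 2 then -1 / (|y| ^ α * Real.log |y|) else 0

section LogWeight

variable {α : ℝ}

theorem log_le_neg_log_two {y : ℝ} (hy0 : 0 < y) (hy : y ≤ 1 / 2) :
    Real.log y ≤ -Real.log 2 := by
  simpa [one_div, Real.log_inv] using Real.log_le_log hy0 hy

theorem logWeight_nonneg (α y : ℝ) : 0 ≤ logWeight α y := by
  unfold logWeight
  split_ifs with h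
  · have hlog : Real.log |y| < 0 := (log_le_neg_log_two h.1 h.2).trans_lt
      (neg_neg_of_pos (Real.log_pos one_lt_two))
    exact div_nonneg_of_nonpos (by norm_num)
      (mul_neg_of_pos_of_neg (rpow_pos_of_pos h.1 α) hlog).le
  · exact le_rfl

theorem logWeight_le (α y : ℝ) : logWeight α y ≤ |y| ^ (-α) / Real.log 2 := by
  unfold logWeight
  have hlog2 : 0 < Real.log 2 := Real.log_pos one_lt_two
  split_ifs with h
  · have hlog := log_le_neg_log_two h.1 h.2
    have hpow := rpow_pos_of_pos h.1 α
    rw [rpow_neg (abs_nonneg y),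
      show -1 / (|y| ^ α * Real.log |y|) = (|y| ^ α)⁻¹ / -Real.log |y| by field_simp]
    gcongr
    linarith
  · positivity

theorem measurable_logWeight (α : ℝ) : Measurable (logWeight α) :=
  Measurable.ite (measurableSet_lt measurable_const measurable_abs |>.inter
      (measurableSet_le measurable_abs measurable_const))
    (measurable_const.div
      ((measurable_abs.pow_const α).mul (Real.measurable_log.comp measurable_abs)))
    measurable_const

theorem integrableOn_logWeight (hα : α < 1) (c d : ℝ) :
    IntegrableOn (logWeight α) (Icc c d) := by
  have hbound : IntegrableOn (fun y : ℝ => |y| ^ (-α) / Real.log 2) (Icc c d) := by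
    have h := (integrableOn_abs_sub_rpow (r := -α) (by linarith) 0 c d).div_const (Real.log 2)
    simp only [sub_zero] at h
    exact h
  refine hbound.mono' (measurable_logWeight α).aestronglyMeasurable (ae_of_all _ fun y => ?_)
  rw [Real.norm_of_nonneg (logWeight_nonneg α y)]
  exact logWeight_le α y

theorem rpow_sub_one_mul_logWeight {y : ℝ} (hy0 : 0 < y) (hy : y ≤ 1 / 2) :
    y ^ (α - 1) * logWeight α y = -1 / (y * Real.log y) := by
  have hw : logWeight α y = -1 / (y ^ α * Real.log y) := by
    rw [logWeight, abs_of_pos hy0, if_pos ⟨hy0, hy⟩]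
  rw [hw, rpow_sub_one hy0.ne']
  have := (rpow_pos_of_pos hy0 α).ne'
  field_simp

end LogWeight

theorem hasDerivAt_neg_log_neg_log {y : ℝ} (hy0 : 0 < y) (hy1 : y < 1) :
    HasDerivAt (fun t => -Real.log (-Real.log t)) (-1 / (y * Real.log y)) y := by
  have hlog : Real.log y < 0 := Real.log_neg hy0 hy1
  have h := ((Real.hasDerivAt_log hy0.ne').neg.log (neg_ne_zero.2 hlog.ne)).neg
  exact h.congr_deriv (by simp only [Pi.neg_apply]; field_simp)

theorem continuousOn_neg_inv_mul_log : ContinuousOn (fun y => -1 / (y * Real.log y)) (Ioo 0 1) :=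
  fun _ hy => (continuousAt_const.div (continuousAt_id.mul (Real.continuousAt_log hy.1.ne'))
    (mul_neg_of_pos_of_neg hy.1 (Real.log_neg hy.1 hy.2)).ne).continuousWithinAt

theorem intervalIntegrable_neg_inv_mul_log {u v : ℝ} (hu : 0 < u) (huv : u ≤ v) (hv : v < 1) :
    IntervalIntegrable (fun y => -1 / (y * Real.log y)) volume u v :=
  ContinuousOn.intervalIntegrable_of_Icc huv <| continuousOn_neg_inv_mul_log.mono
    (Icc_subset_Ioo hu hv)

theorem integral_neg_inv_mul_log {u v : ℝ} (hu : 0 < u) (huv : u ≤ v) (hv : v < 1) :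
    ∫ y in u..v, -1 / (y * Real.log y) = Real.log (-Real.log u) - Real.log (-Real.log v) := by
  have hderiv (y : ℝ) (hy : y ∈ uIcc u v) :
      HasDerivAt (fun t => -Real.log (-Real.log t)) (-1 / (y * Real.log y)) y := by
    rw [uIcc_of_le huv] at hy
    exact hasDerivAt_neg_log_neg_log (hu.trans_le hy.1) (hy.2.trans_lt hv)
  rw [intervalIntegral.integral_eq_sub_of_hasDerivAt hderiv
    (intervalIntegrable_neg_inv_mul_log hu huv hv)]
  ring

theorem log_neg_log_sub_le_integral {α x u : ℝ} (hα : α < 1) (hx : 0 ≤ x) (hxu : x ≤ u)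
    (hu : 0 < u) (hu2 : u ≤ 1 / 2)
    (hint : IntegrableOn (fun y => |x - y| ^ (α - 1) * logWeight α y)
      (Icc (-(1 : ℝ) / 2) (1 / 2))) :
    Real.log (-Real.log u) - Real.log (Real.log 2) ≤
      ∫ y in Icc (-(1 : ℝ) / 2) (1 / 2), |x - y| ^ (α - 1) * logWeight α y := by
  have hsub : Ioc u (1 / 2) ⊆ Icc (-(1 : ℝ) / 2) (1 / 2) :=
    Ioc_subset_Icc_self.trans (Icc_subset_Icc (by linarith) le_rfl)
  have hlower_int : IntegrableOn (fun y => -1 / (y * Real.log y)) (Ioc u (1 / 2)) :=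
    (intervalIntegrable_iff_integrableOn_Ioc_of_le hu2).1
      (intervalIntegrable_neg_inv_mul_log hu hu2 (by norm_num))
  have hpointwise (y : ℝ) (hy : y ∈ Ioc u (1 / 2)) :
      -1 / (y * Real.log y) ≤ |x - y| ^ (α - 1) * logWeight α y := by
    have hy0 : 0 < y := hu.trans hy.1
    rw [← rpow_sub_one_mul_logWeight hy0 hy.2, abs_sub_comm, abs_of_pos (by linarith [hy.1])]
    exact mul_le_mul_of_nonneg_right
      (rpow_le_rpow_of_nonpos (by linarith [hy.1]) (by linarith) (by linarith))
      (logWeight_nonneg α y)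
  calc Real.log (-Real.log u) - Real.log (Real.log 2)
      = ∫ y in Ioc u (1 / 2), -1 / (y * Real.log y) := by
        rw [← intervalIntegral.integral_of_le hu2, integral_neg_inv_mul_log hu hu2 (by norm_num),
          one_div, Real.log_inv, neg_neg]
    _ ≤ ∫ y in Ioc u (1 / 2), |x - y| ^ (α - 1) * logWeight α y :=
        setIntegral_mono_on hlower_int (hint.mono_set hsub) measurableSet_Ioc hpointwise
    _ ≤ ∫ y in Icc (-(1 : ℝ) / 2) (1 / 2), |x - y| ^ (α - 1) * logWeight α y :=
        setIntegral_mono_set hint (ae_of_all _ fun y =>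
          mul_nonneg (rpow_nonneg (abs_nonneg _) _) (logWeight_nonneg α y)) hsub.eventuallyLE

theorem exists_log_neg_log_sub_eq {L : ℝ} (hL : 0 ≤ L) :
    ∃ u : ℝ, 0 < u ∧ u ≤ 1 / 2 ∧ Real.log (-Real.log u) - Real.log (Real.log 2) = L := by
  have hlog2 : 0 < Real.log 2 := Real.log_pos one_lt_two
  refine ⟨Real.exp (-(Real.log 2 * Real.exp L)), Real.exp_pos _, ?_, ?_⟩
  · calc Real.exp (-(Real.log 2 * Real.exp L)) ≤ Real.exp (-Real.log 2) := by
          gcongr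
          exact le_mul_of_one_le_right hlog2.le (Real.one_le_exp hL)
      _ = 1 / 2 := by rw [Real.exp_neg, Real.exp_log two_pos, one_div]
  · rw [Real.log_exp, neg_neg, Real.log_mul hlog2.ne' (Real.exp_pos L).ne', Real.log_exp]
    ring

theorem le_meanOscillation_of_eq_zero_of_le {F : ℝ → ℝ} {u L : ℝ} (hu : 0 < u)
    (hF : IntegrableOn F (Ioc (-u) u)) (hzero : ∀ x ∈ Ioc (-u) 0, F x = 0)
    (hlarge : ∀ᵐ x, x ∈ Ioc 0 u → L ≤ F x) :
    L / 4 ≤ (2 * u)⁻¹ * ∫ x in Ioc (-u) u, |F x - ⨍ y in Ioc (-u) u, F y| := by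
  set A := ⨍ y in Ioc (-u) u, F y with hA
  have hsplit : Ioc (-u) u = Ioc (-u) 0 ∪ Ioc 0 u :=
    (Ioc_union_Ioc_eq_Ioc (by linarith) hu.le).symm
  have hdisj : Disjoint (Ioc (-u) 0) (Ioc 0 u) := Ioc_disjoint_Ioc_of_le le_rfl
  have hleft : Ioc (-u) 0 ⊆ Ioc (-u) u := Ioc_subset_Ioc le_rfl hu.le
  have hright : Ioc 0 u ⊆ Ioc (-u) u := Ioc_subset_Ioc (by linarith) le_rfl
  have hintegral : L * u ≤ ∫ x in Ioc (-u) u, F x := by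
    rw [hsplit, setIntegral_union hdisj measurableSet_Ioc (hF.mono_set hleft) (hF.mono_set hright),
      setIntegral_eq_zero_of_forall_eq_zero hzero, zero_add]
    calc L * u = ∫ _ in Ioc 0 u, L := by
          rw [setIntegral_const, Real.volume_real_Ioc_of_le hu.le, smul_eq_mul]; ring
      _ ≤ ∫ x in Ioc 0 u, F x :=
          setIntegral_mono_on_ae (integrableOn_const measure_Ioc_lt_top.ne) (hF.mono_set hright)
            measurableSet_Ioc hlarge
  have haverage : L / 2 ≤ A := by
    rw [hA, setAverage_eq, Real.volume_real_Ioc_of_le (by linarith), smul_eq_mul,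
      show u - -u = 2 * u by ring]
    rw [le_inv_mul_iff₀ (by positivity)]
    linarith
  have hoscillation : u * |A| ≤ ∫ x in Ioc (-u) u, |F x - A| := by
    calc u * |A| = ∫ x in Ioc (-u) 0, |F x - A| := by
          rw [setIntegral_congr_fun measurableSet_Ioc
              fun x hx => by rw [hzero x hx, zero_sub, abs_neg],
            setIntegral_const, Real.volume_real_Ioc_of_le (by linarith), smul_eq_mul]
          ring
      _ ≤ ∫ x in Ioc (-u) u, |F x - A| :=
          setIntegral_mono_set ((hF.sub (integrableOn_const measure_Ioc_lt_top.ne)).abs)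
            (ae_of_all _ fun _ => abs_nonneg _) hleft.eventuallyLE
  calc L / 4 ≤ |A| / 2 := by linarith [le_abs_self A]
    _ = (2 * u)⁻¹ * (u * |A|) := by field_simp
    _ ≤ (2 * u)⁻¹ * ∫ x in Ioc (-u) u, |F x - A| := by gcongr

end FractionalPotentialNotBMO

open FractionalPotentialNotBMO in
/-- `G = Δ_N^{-α/2} f` (up to a constant factor, extended by `0` to
the negative half-line) is finite a.e. and locally integrable, but is not in
`BMO(ℝ)`. -/
theorem stmt17 (α : ℝ) (hα0 : 0 < α) (hα1 : α < 1)
    (w : ℝ → ℝ)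
    (hw : w = fun y => if 0 < |y| ∧ |y| ≤ 1 / 2 then -1 / (|y| ^ α * Real.log |y|) else 0)
    (G : ℝ → ℝ)
    (hG : G = fun x => if x ≤ 0 then 0 else
      ∫ y in Set.Icc (-(1 : ℝ) / 2) (1 / 2), |x - y| ^ (α - 1) * w y) :
    (∀ᵐ x : ℝ ∂volume,
      IntegrableOn (fun y => |x - y| ^ (α - 1) * w y)
        (Set.Icc (-(1 : ℝ) / 2) (1 / 2)) volume) ∧
    LocallyIntegrable G volume ∧
    (∀ M : ℝ, 0 < M → ∃ a b : ℝ, a < b ∧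
      M < (b - a)⁻¹ * ∫ x in Set.Ioc a b, |G x - ⨍ y in Set.Ioc a b, G y|) := by
  obtain rfl : w = logWeight α := hw
  have hr : -1 < α - 1 := by linarith
  have hweight := integrableOn_logWeight hα1 (-(1 : ℝ) / 2) (1 / 2)
  have hG_indicator : G = (Ioi 0).indicator
      fun x => ∫ y in Icc (-(1 : ℝ) / 2) (1 / 2), |x - y| ^ (α - 1) * logWeight α y := by
    ext x
    simp only [hG, indicator, mem_Ioi, ← not_le, ite_not]
  have hG_integrableOn (a b : ℝ) : IntegrableOn G (Icc a b) := by
    rw [hG_indicator]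
    exact (integrableOn_integral_abs_sub_rpow_mul hr hweight a b).indicator measurableSet_Ioi
  have hfinite := ae_integrableOn_abs_sub_rpow_mul hr hweight
  refine ⟨hfinite, fun x => ⟨Icc (x - 1) (x + 1), Icc_mem_nhds (by linarith) (by linarith),
    hG_integrableOn _ _⟩, fun M hM => ?_⟩
  obtain ⟨u, hu, hu2, hlog⟩ := exists_log_neg_log_sub_eq (L := 4 * M + 1) (by linarith)
  refine ⟨-u, u, by linarith, ?_⟩
  have hosc := le_meanOscillation_of_eq_zero_of_le (F := G) (L := 4 * M + 1) hu
    ((hG_integrableOn (-u) u).mono_set Ioc_subset_Icc_self)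
    (fun x hx => by simp [hG, hx.2])
    (by
      filter_upwards [hfinite] with x hx hxu
      rw [← hlog, hG_indicator, indicator_of_mem (mem_Ioi.2 hxu.1)]
      exact log_neg_log_sub_le_integral hα1 hxu.1.le hxu.2 hu hu2 hx)
  rw [show u - -u = 2 * u by ring]
  linarith
end
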